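/- arXiv:2605.10776 — 6 statements merged into one kernel-verified Lean document; each statement's English description precedes it below -/
import Mathlib

section
/- A graph G is 1-CFON*-colorable if and only if G is 1-CFON*-choosable. Here 1-CFON*-colorable means there is a partial coloring of vertices with a single color such that every vertex has exactly one colored vertex in its open neighborhood; 1-CFON*-choosable means for every assignment of lists of size 1 to the vertices, there is a partial coloring choosing colors from the lists such that every vertex sees some color exactly once in its open neighborhood. -/
/-- `G` is 1-CFON*-colorable iff `G` is 1-CFON*-choosable. -/
theorem stmt_0 {V : Type*} (G : SimpleGraph V)
    (hiso : ∀ v : V, ∃ u, G.Adj v u) :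
    (∃ S : Set V, ∀ v : V, ∃! u, G.Adj v u ∧ u ∈ S) ↔
    (∀ L : V → Finset ℕ, (∀ v, (L v).card = 1) →
      ∃ c : V → Option ℕ, (∀ v a, c v = some a → a ∈ L v) ∧
        ∀ v : V, ∃ a, ∃! u, G.Adj v u ∧ c u = some a) := by
  constructor
  · rintro ⟨S, hS⟩ L hL
    classical
    have hne : ∀ v, (L v).Nonempty := fun v => Finset.card_pos.mp (by rw [hL v]; norm_num)
    refine ⟨fun u => if u ∈ S then some ((L u).min' (hne u)) else none, ?_, ?_⟩
    · intro v a hva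
      by_cases h : v ∈ S
      · simp only [h, if_true, Option.some.injEq] at hva
        exact hva ▸ (L v).min'_mem (hne v)
      · simp [h] at hva
    · intro v
      obtain ⟨u, ⟨hadj, huS⟩, huniq⟩ := hS v
      refine ⟨(L u).min' (hne u), u, ⟨hadj, by simp [huS]⟩, ?_⟩
      rintro u' ⟨hadj', hcu'⟩
      by_cases h : u' ∈ S
      · exact huniq u' ⟨hadj', h⟩
      · simp [h] at hcu'
  · intro h
    obtain ⟨c, hc, hcf⟩ := h (fun _ => {0}) (fun _ => rfl)
    refine ⟨{u | c u = some 0}, fun v => ?_⟩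
    obtain ⟨a, u, ⟨hadj, hcu⟩, huniq⟩ := hcf v
    have ha : a = 0 := by have := hc u a hcu; simpa using this
    subst ha
    exact ⟨u, ⟨hadj, hcu⟩, fun u' hu' => huniq u' ⟨hu'.1, hu'.2⟩⟩
end

section
/- A graph G is 1-CFCN*-colorable if and only if G is 1-CFCN*-choosable. Here 1-CFCN*-colorable means there is a partial coloring of vertices with a single color such that every vertex has exactly one colored vertex in its closed neighborhood; 1-CFCN*-choosable means for every assignment of lists of size 1 to the vertices, there is a partial coloring from lists such that every vertex sees some color exactly once in its closed neighborhood. -/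
/-- `G` is 1-CFCN*-colorable iff `G` is 1-CFCN*-choosable. -/
theorem stmt_1 {V : Type*} (G : SimpleGraph V) :
    (∃ S : Set V, ∀ v : V, ∃! u, (G.Adj v u ∨ u = v) ∧ u ∈ S) ↔
    (∀ L : V → Finset ℕ, (∀ v, (L v).card = 1) →
      ∃ c : V → Option ℕ, (∀ v a, c v = some a → a ∈ L v) ∧
        ∀ v : V, ∃ a, ∃! u, (G.Adj v u ∨ u = v) ∧ c u = some a) := by
  constructor
  · rintro ⟨S, hS⟩ L hL
    have hne : ∀ v, (L v).Nonempty := fun v => Finset.card_pos.mp (by rw [hL v]; norm_num)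
    classical
    refine ⟨fun u => if u ∈ S then some ((L u).min' (hne u)) else none, ?_, ?_⟩
    · intro v a h
      by_cases hv : v ∈ S
      · simp [hv] at h; exact h ▸ Finset.min'_mem _ _
      · simp [hv] at h
    · intro v
      obtain ⟨u, ⟨hu1, hu2⟩, huniq⟩ := hS v
      refine ⟨(L u).min' (hne u), u, ⟨hu1, by simp [hu2]⟩, ?_⟩
      intro u' ⟨h1, h2⟩
      by_cases hu' : u' ∈ S
      · exact huniq u' ⟨h1, hu'⟩
      · simp [hu'] at h2
  · intro h
    obtain ⟨c, hc, hcf⟩ := h (fun _ => {0}) (fun _ => rfl)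
    refine ⟨{u | c u = some 0}, fun v => ?_⟩
    obtain ⟨a, u, ⟨hu1, hu2⟩, huniq⟩ := hcf v
    have ha : a = 0 := by simpa using hc u a hu2
    subst ha
    exact ⟨u, ⟨hu1, hu2⟩, fun u' ⟨h1, h2⟩ => huniq u' ⟨h1, h2⟩⟩
end

section
/- A graph G is 1-CFON*-choosable if and only if G contains a Perfect Induced Matching Dominating Set (PIMDS), i.e., a set S of vertices such that the subgraph induced by S is a perfect matching on S and every vertex of G has exactly one neighbor in S. -/
/-- `G` is 1-CFON*-choosable iff `G` contains a Perfect Induced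
Matching Dominating Set. -/
theorem stmt_2 {V : Type*} (G : SimpleGraph V)
    (hiso : ∀ v : V, ∃ u, G.Adj v u) :
    (∀ L : V → Finset ℕ, (∀ v, (L v).card = 1) →
      ∃ c : V → Option ℕ, (∀ v a, c v = some a → a ∈ L v) ∧
        ∀ v : V, ∃ a, ∃! u, G.Adj v u ∧ c u = some a) ↔
    (∃ S : Set V, (∀ v ∈ S, ∃! u, u ∈ S ∧ G.Adj v u) ∧
      (∀ v : V, ∃! u, u ∈ S ∧ G.Adj v u)) := by
  classical
  constructor
  · intro h
    obtain ⟨c, hc1, hc2⟩ := h (fun _ => {0}) (fun _ => rfl)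
    have key : ∀ v : V, ∃! u, u ∈ {w | c w = some 0} ∧ G.Adj v u := by
      intro v
      obtain ⟨a, u, ⟨hadj, hcu⟩, huniq⟩ := hc2 v
      have ha : a = 0 := by simpa using hc1 u a hcu
      subst ha
      exact ⟨u, ⟨hcu, hadj⟩, fun w ⟨hw1, hw2⟩ => huniq w ⟨hw2, hw1⟩⟩
    exact ⟨{w | c w = some 0}, fun v _ => key v, key⟩
  · rintro ⟨S, _, hS2⟩ L hL
    choose a ha using fun v => Finset.card_eq_one.mp (hL v)
    refine ⟨fun v => if v ∈ S then some (a v) else none, ?_, ?_⟩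
    · intro v b hb
      by_cases hv : v ∈ S
      · simp only [hv, if_pos] at hb
        rw [ha v]
        simp [← Option.some.inj hb]
      · simp [hv] at hb
    · intro v
      obtain ⟨u, ⟨huS, hadj⟩, huniq⟩ := hS2 v
      refine ⟨a u, u, ⟨hadj, by simp [huS]⟩, ?_⟩
      rintro w ⟨hw1, hw2⟩
      have hwS : w ∈ S := by by_contra hn; simp [hn] at hw2
      exact huniq w ⟨hwS, hw1⟩
end

section
/- A graph G is 1-CFCN*-choosable if and only if G contains a Perfect Independent Dominating Set (PIDS), i.e., an independent set S of vertices such that every vertex not in S has exactly one neighbor in S. -/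
/-- `G` is 1-CFCN*-choosable iff `G` contains a Perfect
Independent Dominating Set. -/
theorem stmt_3 {V : Type*} (G : SimpleGraph V) :
    (∀ L : V → Finset ℕ, (∀ v, (L v).card = 1) →
      ∃ c : V → Option ℕ, (∀ v a, c v = some a → a ∈ L v) ∧
        ∀ v : V, ∃ a, ∃! u, (G.Adj v u ∨ u = v) ∧ c u = some a) ↔
    (∃ S : Set V, (∀ u ∈ S, ∀ w ∈ S, ¬ G.Adj u w) ∧
      (∀ v : V, v ∉ S → ∃! u, u ∈ S ∧ G.Adj v u)) := by
  classical
  constructor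
  · intro h
    obtain ⟨c, hc, hu⟩ := h (fun _ => {0}) (fun v => rfl)
    -- every color used must be 0
    have hc0 : ∀ v a, c v = some a → a = 0 := by
      intro v a hv
      simpa using hc v a hv
    refine ⟨{v | c v = some 0}, ?_, ?_⟩
    · intro u hu' w hw hadj
      obtain ⟨a, x, ⟨hx1, hx2⟩, hxu⟩ := hu u
      have ha : a = 0 := hc0 x a hx2
      subst ha
      have h1 : u = x := hxu u ⟨Or.inr rfl, hu'⟩
      have h2 : w = x := hxu w ⟨Or.inl hadj, hw⟩
      exact G.irrefl (h1 ▸ h2 ▸ hadj)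
    · intro v hv
      obtain ⟨a, x, ⟨hx1, hx2⟩, hxu⟩ := hu v
      have ha : a = 0 := hc0 x a hx2
      subst ha
      have hxv : x ≠ v := by rintro rfl; exact hv hx2
      have hadjx : G.Adj v x := hx1.resolve_right hxv
      refine ⟨x, ⟨hx2, hadjx⟩, ?_⟩
      intro y ⟨hyS, hyadj⟩
      exact hxu y ⟨Or.inl hyadj, hyS⟩
  · rintro ⟨S, hind, hdom⟩ L hL
    have hsing : ∀ v, ∃ a, L v = {a} := fun v => Finset.card_eq_one.mp (hL v)
    set f : V → ℕ := fun v => (hsing v).choose with hf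
    have hfL : ∀ v, L v = {f v} := fun v => (hsing v).choose_spec
    refine ⟨fun v => if v ∈ S then some (f v) else none, ?_, ?_⟩
    · intro v a hva
      by_cases hv : v ∈ S
      · simp only [hv, if_pos] at hva
        rw [hfL v]
        simp [← Option.some_inj.mp hva]
      · simp [hv] at hva
    · intro v
      by_cases hv : v ∈ S
      · refine ⟨f v, v, ⟨Or.inr rfl, by simp [hv]⟩, ?_⟩
        rintro y ⟨hy1, hy2⟩
        have hyS : y ∈ S := by
          by_contra hyS
          simp [hyS] at hy2
        rcases hy1 with hadj | rfl
        · exact absurd (hadj.symm) (hind y hyS v hv)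
        · rfl
      · obtain ⟨u, ⟨huS, hadj⟩, huniq⟩ := hdom v hv
        refine ⟨f u, u, ⟨Or.inl hadj, by simp [huS]⟩, ?_⟩
        rintro y ⟨hy1, hy2⟩
        have hyS : y ∈ S := by
          by_contra hyS
          simp [hyS] at hy2
        rcases hy1 with hadj' | rfl
        · exact huniq y ⟨hyS, hadj'⟩
        · exact absurd hyS hv
end

section
/- For any hypergraph H = (V, E), the CF choice number of H is at most Δ(H) + 1, where Δ(H) is the maximum number of hyperedges containing any single vertex. That is, for every assignment of lists of size Δ(H)+1 to the vertices, there is a coloring of all vertices from their lists such that every hyperedge contains a vertex whose color appears exactly once in that hyperedge. -/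
private lemma stmt_7_aux {V : Type*} [DecidableEq V] (E : Finset (Finset V)) (D : ℕ)
    (hdeg : ∀ v : V, (E.filter (fun e => v ∈ e)).card ≤ D)
    (L : V → Finset ℕ) (hL : ∀ v, (L v).card = D + 1) (S : Finset V) :
    ∃ c : V → ℕ, (∀ v, c v ∈ L v) ∧
      ∀ e ∈ E, (e ∩ S).Nonempty → ∃ a, ∃! w, w ∈ e ∧ w ∈ S ∧ c w = a := by
  classical
  induction S using Finset.induction_on with
  | empty =>
      have hLne : ∀ v, (L v).Nonempty := fun v => by
        rw [← Finset.card_pos, hL v]; omega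
      exact ⟨fun v => (hLne v).choose, fun v => (hLne v).choose_spec,
        fun e _ h => absurd h (by simp)⟩
  | @insert v S' hv ih =>
      obtain ⟨c', hc'1, hc'2⟩ := ih
      set g : Finset V → ℕ := fun e =>
        if h : ∃ a, ∃! w, w ∈ e ∧ w ∈ S' ∧ c' w = a then h.choose else 0 with hg
      set forb : Finset ℕ := (E.filter (fun e => v ∈ e)).image g with hforb
      have hforbcard : forb.card ≤ D :=
        le_trans (Finset.card_image_le) (hdeg v)
      have hb : ∃ b ∈ L v, b ∉ forb := by
        by_contra hcon
        push_neg at hcon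
        have := Finset.card_le_card (fun x hx => hcon x hx)
        rw [hL v] at this; omega
      obtain ⟨b, hbL, hbforb⟩ := hb
      refine ⟨Function.update c' v b, ?_, ?_⟩
      · intro w
        by_cases hw : w = v
        · subst hw; simpa using hbL
        · simpa [Function.update_of_ne hw] using hc'1 w
      · intro e he hene
        by_cases hve : v ∈ e
        · by_cases he' : (e ∩ S').Nonempty
          · have hex := hc'2 e he he'
            obtain ⟨u, ⟨hu1, hu2, hu3⟩, huniq⟩ := hex.choose_spec
            have hge : g e = hex.choose := dif_pos hex
            have hba : b ≠ hex.choose := by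
              intro hcontra
              apply hbforb
              rw [hforb]
              exact Finset.mem_image.2 ⟨e, Finset.mem_filter.2 ⟨he, hve⟩,
                by rw [hge, hcontra]⟩
            have huv : u ≠ v := fun h => hv (h ▸ hu2)
            refine ⟨hex.choose, u, ⟨hu1, Finset.mem_insert_of_mem hu2,
              by rw [Function.update_of_ne huv]; exact hu3⟩, ?_⟩
            intro w ⟨hw1, hw2, hw3⟩
            by_cases hwv : w = v
            · exfalso; apply hba
              rw [← hw3, hwv, Function.update_self]
            · rw [Function.update_of_ne hwv] at hw3
              exact huniq w ⟨hw1, (Finset.mem_insert.1 hw2).resolve_left hwv, hw3⟩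
          · -- e ∩ S' is empty, so v is the only vertex of e in insert v S'
            refine ⟨b, v, ⟨hve, Finset.mem_insert_self v S', Function.update_self v b c'⟩, ?_⟩
            intro w ⟨hw1, hw2, _⟩
            rcases Finset.mem_insert.1 hw2 with h | h
            · exact h
            · exact absurd ⟨w, Finset.mem_inter.2 ⟨hw1, h⟩⟩ he'
        · -- v ∉ e
          have he' : (e ∩ S').Nonempty := by
            obtain ⟨x, hx⟩ := hene
            rw [Finset.mem_inter] at hx
            refine ⟨x, Finset.mem_inter.2 ⟨hx.1, ?_⟩⟩
            rcases Finset.mem_insert.1 hx.2 with h | h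
            · exact absurd (h ▸ hx.1) hve
            · exact h
          obtain ⟨a, u, ⟨hu1, hu2, hu3⟩, huniq⟩ := hc'2 e he he'
          have huv : u ≠ v := fun h => hve (h ▸ hu1)
          refine ⟨a, u, ⟨hu1, Finset.mem_insert_of_mem hu2,
            by rw [Function.update_of_ne huv]; exact hu3⟩, ?_⟩
          intro w ⟨hw1, hw2, hw3⟩
          have hwv : w ≠ v := fun h => hve (h ▸ hw1)
          rw [Function.update_of_ne hwv] at hw3
          exact huniq w ⟨hw1, (Finset.mem_insert.1 hw2).resolve_left hwv, hw3⟩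

/-- for a hypergraph of maximum degree at most `D` with nonempty
hyperedges, every assignment of lists of size `D + 1` admits a conflict-free
coloring of all vertices from the lists. -/
theorem stmt_7 {V : Type*} [Fintype V] [DecidableEq V] (E : Finset (Finset V))
    (hne : ∀ e ∈ E, e.Nonempty) (D : ℕ)
    (hdeg : ∀ v : V, (E.filter (fun e => v ∈ e)).card ≤ D)
    (L : V → Finset ℕ) (hL : ∀ v, (L v).card = D + 1) :
    ∃ c : V → ℕ, (∀ v, c v ∈ L v) ∧
      ∀ e ∈ E, ∃ a, ∃! v, v ∈ e ∧ c v = a := by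
  obtain ⟨c, hc1, hc2⟩ := stmt_7_aux E D hdeg L hL Finset.univ
  refine ⟨c, hc1, fun e he => ?_⟩
  obtain ⟨a, ha⟩ := hc2 e he (by simpa [Finset.inter_univ] using hne e he)
  refine ⟨a, ?_⟩
  simpa using ha
end

section
/- Let G be a graph with vertex set {v_1,...,v_n} and let D_G be its extended double cover: the bipartite graph on parts X = {x_1,...,x_n} and Y = {y_1,...,y_n} with x_i adjacent to y_j if and only if i = j or v_i is adjacent to v_j in G. Then for every k ≥ 1, G is k-CFCN*-choosable if and only if D_G is k-CFON*-choosable. -/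
/-- `G` is `k`-CFON*-choosable. -/
def CFONstarChoosable {V : Type*} (G : SimpleGraph V) (k : ℕ) : Prop :=
  ∀ L : V → Finset ℕ, (∀ v, (L v).card = k) →
    ∃ c : V → Option ℕ, (∀ v a, c v = some a → a ∈ L v) ∧
      ∀ v : V, ∃ a, ∃! u, G.Adj v u ∧ c u = some a

/-- `G` is `k`-CFCN*-choosable. -/
def CFCNstarChoosable {V : Type*} (G : SimpleGraph V) (k : ℕ) : Prop :=
  ∀ L : V → Finset ℕ, (∀ v, (L v).card = k) →
    ∃ c : V → Option ℕ, (∀ v a, c v = some a → a ∈ L v) ∧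
      ∀ v : V, ∃ a, ∃! u, (G.Adj v u ∨ u = v) ∧ c u = some a

/-- The extended double cover of `G`. -/
def extDoubleCover {V : Type*} (G : SimpleGraph V) : SimpleGraph (V ⊕ V) where
  Adj x y := match x, y with
    | Sum.inl i, Sum.inr j => i = j ∨ G.Adj i j
    | Sum.inr j, Sum.inl i => i = j ∨ G.Adj i j
    | _, _ => False
  symm := by constructor; rintro (i | i) (j | j) h <;> exact h
  loopless := by constructor; rintro (i | i) h <;> exact h

/-! The open neighbourhood of `x_i` in the extended double cover is the copy in `Y` of the
closed neighbourhood of `v_i`, and symmetrically; hence a partial colouring of the cover is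
conflict-free on `X` (resp. `Y`) exactly when its restriction to `Y` (resp. `X`) is
closed-neighbourhood conflict-free on `G`. So the two sides of the cover can be coloured
independently; conversely, giving both copies of each vertex its list, the colouring read off
`Y` works for `G`. -/

theorem existsUnique_sum_iff_inr {α β : Type*} {p : α ⊕ β → Prop}
    (hp : ∀ a, ¬ p (Sum.inl a)) : (∃! x, p x) ↔ ∃! b, p (Sum.inr b) := by
  constructor
  · rintro ⟨(a | b), hx, huniq⟩
    · exact absurd hx (hp a)
    · exact ⟨b, hx, fun b' hb' => Sum.inr_injective (huniq _ hb')⟩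
  · rintro ⟨b, hb, huniq⟩
    refine ⟨Sum.inr b, hb, ?_⟩
    rintro (a' | b') h
    · exact absurd h (hp a')
    · exact congrArg Sum.inr (huniq b' h)

theorem existsUnique_sum_iff_inl {α β : Type*} {p : α ⊕ β → Prop}
    (hp : ∀ b, ¬ p (Sum.inr b)) : (∃! x, p x) ↔ ∃! a, p (Sum.inl a) := by
  rw [(Equiv.sumComm α β).existsUnique_congr_left]
  exact existsUnique_sum_iff_inr hp

namespace extDoubleCover

variable {V : Type*} (G : SimpleGraph V)

theorem adj_inl_inr_iff {i j : V} :
    (extDoubleCover G).Adj (Sum.inl i) (Sum.inr j) ↔ G.Adj i j ∨ j = i := by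
  rw [or_comm, eq_comm]; rfl

theorem adj_inr_inl_iff {i j : V} :
    (extDoubleCover G).Adj (Sum.inr i) (Sum.inl j) ↔ G.Adj i j ∨ j = i := by
  rw [G.adj_comm, or_comm]; rfl

theorem existsUnique_adj_inl_iff (c : V ⊕ V → Option ℕ) (i : V) (a : ℕ) :
    (∃! w, (extDoubleCover G).Adj (Sum.inl i) w ∧ c w = some a) ↔
      ∃! j, (G.Adj i j ∨ j = i) ∧ c (Sum.inr j) = some a := by
  rw [existsUnique_sum_iff_inr fun _ h => h.1]
  simp only [adj_inl_inr_iff]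

theorem existsUnique_adj_inr_iff (c : V ⊕ V → Option ℕ) (i : V) (a : ℕ) :
    (∃! w, (extDoubleCover G).Adj (Sum.inr i) w ∧ c w = some a) ↔
      ∃! j, (G.Adj i j ∨ j = i) ∧ c (Sum.inl j) = some a := by
  rw [existsUnique_sum_iff_inl fun _ h => h.1]
  simp only [adj_inr_inl_iff]

end extDoubleCover

open extDoubleCover in
theorem stmt_11_general {V : Type*} (G : SimpleGraph V) (k : ℕ) :
    CFCNstarChoosable G k ↔ CFONstarChoosable (extDoubleCover G) k := by
  constructor
  · intro h L hL
    obtain ⟨cX, hcXL, hcX⟩ := h (L ∘ Sum.inl) fun _ => hL _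
    obtain ⟨cY, hcYL, hcY⟩ := h (L ∘ Sum.inr) fun _ => hL _
    refine ⟨Sum.elim cX cY, ?_, ?_⟩
    · rintro (i | i)
      exacts [hcXL i, hcYL i]
    · rintro (i | i)
      · simpa only [existsUnique_adj_inl_iff, Sum.elim_inr] using hcY i
      · simpa only [existsUnique_adj_inr_iff, Sum.elim_inl] using hcX i
  · intro h L hL
    obtain ⟨c, hcL, hc⟩ := h (Sum.elim L L) fun u => by cases u <;> exact hL _
    refine ⟨c ∘ Sum.inr, fun v => hcL (Sum.inr v), fun v => ?_⟩
    simpa only [existsUnique_adj_inl_iff, Function.comp_apply] using hc (Sum.inl v)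

/-- `G` is `k`-CFCN*-choosable iff its extended double cover is
`k`-CFON*-choosable. -/
theorem stmt_11 {V : Type*} (G : SimpleGraph V) (k : ℕ) (hk : 1 ≤ k) :
    CFCNstarChoosable G k ↔ CFONstarChoosable (extDoubleCover G) k :=
  stmt_11_general G k
end
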